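/- For every positive integer d and every nonnegative integer n, p_d(n) ≤ a_d(n) ≤ p_d(n + T_d), where p_d(m) denotes the number of partitions of m into at most d parts and T_d = d(d+1)/2. -/

import Mathlib

/-- `a d n`: the number of tuples `(k₁, …, k_d)` of nonnegative integers summing to `n`
with `k_{j} ≤ k_{j-1} + 1` for `j ∈ {2, …, d}`. -/
def a (d n : ℕ) : ℕ :=
  Finset.card ((Finset.univ : Finset (Fin d → Fin (n + 1))).filter fun t =>
    (∑ i, (t i : ℕ)) = n ∧
    ∀ i : Fin d, ∀ h : i.val + 1 < d, (t ⟨i.val + 1, h⟩ : ℕ) ≤ (t i : ℕ) + 1)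

/-- `pAtMost d m`: the number of partitions of `m` into at most `d` parts. -/
def pAtMost (d m : ℕ) : ℕ :=
  Finset.card (Finset.univ.filter fun p : Nat.Partition m => Multiset.card p.parts ≤ d)

/-!
Sorting the parts of a partition of `n` into at most `d` parts and padding with zeros gives a
non-increasing `d`-tuple summing to `n`, and non-increasing tuples trivially satisfy
`k_j ≤ k_{j-1} + 1`: this gives the lower bound. Conversely, adding the staircase
`(d, d - 1, …, 1)` to a tuple counted by `a d n` gives a non-increasing tuple of positive integers
summing to `n + T_d`, i.e. a partition into `d` parts; a non-increasing tuple is determined by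
its multiset of entries, so this is injective.
-/

open Finset

lemma Fin.antitone_of_succ_le {α : Type*} [Preorder α] {d : ℕ} {f : Fin d → α}
    (h : ∀ i : Fin d, ∀ hi : i.val + 1 < d, f ⟨i.val + 1, hi⟩ ≤ f i) : Antitone f := by
  cases d with
  | zero => exact fun i => i.elim0
  | succ m => exact Fin.antitone_iff_succ_le.2 fun i => h (Fin.castSucc i) (by simp)

lemma Fin.eq_of_antitone_of_map_univ_eq {α : Type*} [LinearOrder α] {d : ℕ} {f g : Fin d → α}
    (hf : Antitone f) (hg : Antitone g) (h : univ.val.map f = univ.val.map g) : f = g := by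
  rw [Fin.univ_val_map, Fin.univ_val_map, Multiset.coe_eq_coe] at h
  exact List.ofFn_injective <|
    h.eq_of_sortedGE (List.sortedGE_ofFn_iff.2 hf) (List.sortedGE_ofFn_iff.2 hg)

lemma Fin.sum_univ_sub_eq (d : ℕ) : ∑ i : Fin d, (d - i : ℕ) = d * (d + 1) / 2 := by
  induction d with
  | zero => rfl
  | succ d ih =>
    rw [Fin.sum_univ_succ]
    simp only [Fin.val_zero, Fin.val_succ, Nat.add_sub_add_right, ih, Nat.sub_zero]
    rw [show (d + 1) * (d + 1 + 1) = d * (d + 1) + (d + 1) * 2 by ring,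
      Nat.add_mul_div_right _ _ two_pos, add_comm]

lemma List.ofFn_getD_eq_append_replicate {α : Type*} (l : List α) (x : α) {d : ℕ}
    (h : l.length ≤ d) :
    List.ofFn (fun i : Fin d => l.getD i x) = l ++ List.replicate (d - l.length) x := by
  apply List.ext_getElem
  · simp [Nat.add_sub_cancel' h]
  · intro i _ _
    rw [List.getElem_ofFn]
    rcases lt_or_ge i l.length with hi | hi
    · rw [List.getD_eq_getElem _ _ hi, List.getElem_append_left hi]
    · rw [List.getD_eq_default _ _ hi, List.getElem_append_right hi, List.getElem_replicate]

def sortedPad (d : ℕ) (s : Multiset ℕ) (i : Fin d) : ℕ :=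
  (s.sort (· ≥ ·)).getD i 0

section sortedPad

variable {d : ℕ} {s : Multiset ℕ}

lemma ofFn_sortedPad (hs : Multiset.card s ≤ d) :
    List.ofFn (sortedPad d s) = s.sort (· ≥ ·) ++ List.replicate (d - Multiset.card s) 0 :=
  (List.ofFn_getD_eq_append_replicate _ _ (by rwa [Multiset.length_sort])).trans
    (by rw [Multiset.length_sort])

lemma antitone_sortedPad (hs : Multiset.card s ≤ d) : Antitone (sortedPad d s) := by
  rw [← List.sortedGE_ofFn_iff, ofFn_sortedPad hs, List.sortedGE_iff_pairwise,
    List.pairwise_append]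
  refine ⟨Multiset.pairwise_sort _ _, ?_, fun x _ y hy => ?_⟩
  · exact List.pairwise_replicate.2 (Or.inr le_rfl)
  · rw [List.eq_of_mem_replicate hy]
    exact Nat.zero_le x

lemma map_univ_sortedPad (hs : Multiset.card s ≤ d) :
    univ.val.map (sortedPad d s) = s + Multiset.replicate (d - Multiset.card s) 0 := by
  rw [Fin.univ_val_map, ofFn_sortedPad hs, ← Multiset.coe_add, Multiset.sort_eq,
    Multiset.coe_replicate]

lemma sum_sortedPad (hs : Multiset.card s ≤ d) : ∑ i, sortedPad d s i = s.sum := by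
  simp [sum_eq_multiset_sum, map_univ_sortedPad hs]

lemma filter_map_univ_sortedPad (hs : Multiset.card s ≤ d) (hpos : ∀ x ∈ s, 0 < x) :
    (univ.val.map (sortedPad d s)).filter (· ≠ 0) = s := by
  rw [map_univ_sortedPad hs, Multiset.filter_add,
    Multiset.filter_eq_self.2 fun x hx => (hpos x hx).ne',
    Multiset.filter_eq_nil.2 fun x hx => by simp [Multiset.eq_of_mem_replicate hx], add_zero]

end sortedPad

lemma pAtMost_eq_card (d m : ℕ) :
    pAtMost d m = Nat.card {p : Nat.Partition m // Multiset.card p.parts ≤ d} := by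
  rw [pAtMost, ← Fintype.card_subtype, Nat.card_eq_fintype_card]

def RisesByAtMostOne {d : ℕ} (t : Fin d → ℕ) : Prop :=
  ∀ i : Fin d, ∀ h : i.val + 1 < d, t ⟨i.val + 1, h⟩ ≤ t i + 1

def admissibleTuples (d n : ℕ) : Set (Fin d → ℕ) :=
  {t | ∑ i, t i = n ∧ RisesByAtMostOne t}

section admissibleTuples

variable {d n : ℕ}

lemma Antitone.risesByAtMostOne {t : Fin d → ℕ} (ht : Antitone t) : RisesByAtMostOne t :=
  fun _ _ => (ht (Fin.le_def.2 (Nat.le_succ _))).trans (Nat.le_succ _)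

lemma RisesByAtMostOne.antitone_add_sub {t : Fin d → ℕ} (ht : RisesByAtMostOne t) :
    Antitone fun i : Fin d => t i + (d - i) :=
  Fin.antitone_of_succ_le fun i hi => by
    have := ht i hi
    dsimp only
    omega

lemma le_of_mem_admissibleTuples {t : Fin d → ℕ} (ht : t ∈ admissibleTuples d n) (i : Fin d) :
    t i ≤ n :=
  ht.1 ▸ single_le_sum (fun _ _ => Nat.zero_le _) (mem_univ i)

instance : Finite (admissibleTuples d n) :=
  Set.Finite.to_subtype <| (Set.Finite.pi fun _ => Set.finite_Iic n).subset
    fun _ ht i _ => le_of_mem_admissibleTuples ht i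

lemma a_eq_card_admissibleTuples : a d n = Nat.card (admissibleTuples d n) := by
  rw [a, ← Fintype.card_subtype, ← Nat.card_eq_fintype_card]
  exact Nat.card_congr
    { toFun t := ⟨fun i => t.1 i, t.2⟩
      invFun t :=
        ⟨fun i => ⟨t.1 i, Nat.lt_succ_of_le (le_of_mem_admissibleTuples t.2 i)⟩, t.2⟩
      left_inv _ := rfl
      right_inv _ := rfl }

lemma sortedPad_mem_admissibleTuples (p : Nat.Partition n) (hp : Multiset.card p.parts ≤ d) :
    sortedPad d p.parts ∈ admissibleTuples d n :=
  ⟨(sum_sortedPad hp).trans p.parts_sum, (antitone_sortedPad hp).risesByAtMostOne⟩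

lemma pAtMost_le_card_admissibleTuples : pAtMost d n ≤ Nat.card (admissibleTuples d n) := by
  rw [pAtMost_eq_card]
  refine Nat.card_le_card_of_injective
    (fun p => ⟨sortedPad d p.1.parts, sortedPad_mem_admissibleTuples p.1 p.2⟩) ?_
  intro p q h
  have hparts : p.1.parts = q.1.parts := by
    rw [← filter_map_univ_sortedPad p.2 fun _ => p.1.parts_pos,
      ← filter_map_univ_sortedPad q.2 fun _ => q.1.parts_pos]
    exact congrArg (fun t => (univ.val.map t.1).filter (· ≠ 0)) h
  exact Subtype.ext (Nat.Partition.ext hparts)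

def shiftedPartition (t : admissibleTuples d n) : Nat.Partition (n + d * (d + 1) / 2) :=
  Nat.Partition.ofSums _ (univ.val.map fun i => t.1 i + (d - i)) <| by
    rw [← sum_eq_multiset_sum, sum_add_distrib, t.2.1, Fin.sum_univ_sub_eq]

lemma shiftedPartition_parts (t : admissibleTuples d n) :
    (shiftedPartition t).parts = univ.val.map fun i => t.1 i + (d - i) := by
  rw [shiftedPartition, Nat.Partition.ofSums_parts, Multiset.filter_eq_self]
  intro _ hx
  obtain ⟨i, _, rfl⟩ := Multiset.mem_map.1 hx
  have := i.isLt
  omega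

lemma shiftedPartition_injective : Function.Injective (shiftedPartition (d := d) (n := n)) := by
  intro t s h
  have hshift := Fin.eq_of_antitone_of_map_univ_eq t.2.2.antitone_add_sub s.2.2.antitone_add_sub
    (by rw [← shiftedPartition_parts, ← shiftedPartition_parts, h])
  exact Subtype.ext <| funext fun i => Nat.add_right_cancel (congrFun hshift i)

lemma card_admissibleTuples_le_pAtMost :
    Nat.card (admissibleTuples d n) ≤ pAtMost d (n + d * (d + 1) / 2) := by
  rw [pAtMost_eq_card]
  refine Nat.card_le_card_of_injective (fun t => ⟨shiftedPartition t, ?_⟩) ?_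
  · rw [shiftedPartition_parts, Multiset.card_map, card_val, card_univ, Fintype.card_fin]
  · exact fun t s h => shiftedPartition_injective (congrArg Subtype.val h)

end admissibleTuples

theorem pd_le_ad_le_pd_general (d n : ℕ) :
    pAtMost d n ≤ a d n ∧ a d n ≤ pAtMost d (n + d * (d + 1) / 2) := by
  rw [a_eq_card_admissibleTuples]
  exact ⟨pAtMost_le_card_admissibleTuples, card_admissibleTuples_le_pAtMost⟩

/-- **Lemma.** For every positive integer `d` and nonnegative integer `n`,
`p_d(n) ≤ a_d(n) ≤ p_d(n + T_d)` where `T_d = d(d+1)/2`. -/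
theorem pd_le_ad_le_pd (d n : ℕ) (hd : 0 < d) :
    pAtMost d n ≤ a d n ∧ a d n ≤ pAtMost d (n + d * (d + 1) / 2) :=
  pd_le_ad_le_pd_general d n
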